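/- The expansion of exp(t(X_0 + (1/2)Σ_{i=1}^d X_i²)) in ℝ[[X_0,...,X_d]] equals 1 + Σ_{k=1}^∞ Σ_{I ∈ ℐ_k} (t^{(k+n(I))/2} / (2^{(k-n(I))/2} · ((k+n(I))/2)!)) X_{i_1}⋯X_{i_k}, where ℐ_k is the set of words of length k obtained by concatenating blocks {0} and {(i,i)}, i ∈ {1,...,d}, and n(I) is the number of 0's in I. -/

import Mathlib

/-- Non-commutative formal power series `ℝ[[X₀,…,X_d]]`, by coefficients on words. -/
def NCSeries (d : ℕ) : Type := List (Fin (d + 1)) → ℝ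

/-- The unit `1` of `ℝ[[X₀,…,X_d]]`. -/
noncomputable def NCSeries.one {d : ℕ} : NCSeries d := fun w => if w = [] then 1 else 0

/-- The product in `ℝ[[X₀,…,X_d]]`. -/
noncomputable def NCSeries.mul {d : ℕ} (a b : NCSeries d) : NCSeries d := fun w =>
  ∑ k ∈ Finset.range (w.length + 1), a (w.take k) * b (w.drop k)

/-- Powers in `ℝ[[X₀,…,X_d]]`. -/
noncomputable def NCSeries.pow {d : ℕ} (a : NCSeries d) : ℕ → NCSeries d
  | 0 => NCSeries.one
  | k + 1 => NCSeries.mul a (NCSeries.pow a k)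

/-- `exp Y = Σ_{k ≥ 0} Y^k / k!` in `ℝ[[X₀,…,X_d]]` (finite sum on each coefficient for
`Y` with zero constant term). -/
noncomputable def NCSeries.exp {d : ℕ} (a : NCSeries d) : NCSeries d := fun w =>
  ∑ k ∈ Finset.range (w.length + 1), NCSeries.pow a k w / (Nat.factorial k : ℝ)

/-- The element `t (X₀ + (1/2) Σ_{i=1}^d Xᵢ²)` of `ℝ[[X₀,…,X_d]]`. -/
noncomputable def generatorElt {d : ℕ} (t : ℝ) : NCSeries d := fun w =>
  match w with
  | [i] => if i = 0 then t else 0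
  | [i, j] => if i = j ∧ i ≠ 0 then t / 2 else 0
  | _ => 0

/-- `ℐ`: the words obtained by all possible concatenations of the blocks `{0}` and
`{(i,i)}`, `i ∈ {1,…,d}`. -/
inductive BlockWord {d : ℕ} : List (Fin (d + 1)) → Prop
  | nil : BlockWord []
  | zero (w : List (Fin (d + 1))) : BlockWord w → BlockWord (0 :: w)
  | pair (i : Fin (d + 1)) (w : List (Fin (d + 1))) : i ≠ 0 → BlockWord w →
      BlockWord (i :: i :: w)


/-!
Only `X₀` and the squares `Xᵢ²` (`i ≠ 0`) occur in the generator, so the coefficient of a word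
in its `k`-th power is read off by peeling blocks from the left: a leading `0` contributes `t`,
a leading pair `i i` contributes `t / 2`, and anything else contributes nothing. Hence the `k`-th
power is supported on the block words with exactly `k` blocks, and in the exponential series only
the term `k = (|w| + n(w)) / 2` survives.
-/

namespace NCSeries

variable {d : ℕ}

noncomputable def C (c : ℝ) : NCSeries d := fun v => if v = [] then c else 0

def leftQuot (x : Fin (d + 1)) (a : NCSeries d) : NCSeries d := fun v => a (x :: v)

theorem mul_apply_nil (a b : NCSeries d) : mul a b [] = a [] * b [] := by
  simp [mul]

theorem mul_apply_cons (a b : NCSeries d) (x : Fin (d + 1)) (w : List (Fin (d + 1))) :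
    mul a b (x :: w) = a [] * b (x :: w) + mul (leftQuot x a) b w := by
  simp only [mul, List.length_cons]
  rw [Finset.sum_range_succ', add_comm]
  simp [leftQuot]

theorem leftQuot_C (x : Fin (d + 1)) (c : ℝ) : leftQuot x (C c) = C (d := d) 0 := by
  funext v
  simp [leftQuot, C]

theorem C_mul_apply (c : ℝ) (b : NCSeries d) (w : List (Fin (d + 1))) :
    mul (C c) b w = c * b w := by
  induction w generalizing c with
  | nil => simp [mul_apply_nil, C]
  | cons x w ih => simp [mul_apply_cons, leftQuot_C, ih, C]

end NCSeries

open NCSeries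

section Generator

variable {d : ℕ} (t : ℝ)

theorem generatorElt_apply_nil : generatorElt (d := d) t [] = 0 :=
  rfl

theorem generatorElt_apply_singleton (i : Fin (d + 1)) :
    generatorElt t [i] = if i = 0 then t else 0 :=
  rfl

theorem generatorElt_apply_pair (i j : Fin (d + 1)) :
    generatorElt t [i, j] = if i = j ∧ i ≠ 0 then t / 2 else 0 :=
  rfl

theorem generatorElt_apply_cons_cons_cons (i j k : Fin (d + 1)) (w : List (Fin (d + 1))) :
    generatorElt t (i :: j :: k :: w) = 0 :=
  rfl

theorem leftQuot_zero_generatorElt :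
    leftQuot 0 (generatorElt (d := d) t) = C t := by
  funext v
  rcases v with _ | ⟨x, _ | ⟨y, v⟩⟩ <;>
    simp [generatorElt_apply_singleton, generatorElt_apply_pair,
      generatorElt_apply_cons_cons_cons, C, leftQuot]

theorem leftQuot_leftQuot_generatorElt {i : Fin (d + 1)} (hi : i ≠ 0) (x : Fin (d + 1)) :
    leftQuot x (leftQuot i (generatorElt t)) = C (if x = i then t / 2 else 0) := by
  funext v
  rcases v with _ | ⟨y, v⟩
  · by_cases hx : x = i <;> simp [generatorElt_apply_pair, C, leftQuot, hx, hi, Ne.symm]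
  · simp [generatorElt_apply_cons_cons_cons, C, leftQuot]

variable (b : NCSeries d)

theorem mul_generatorElt_apply_nil : mul (generatorElt t) b [] = 0 := by
  rw [mul_apply_nil, generatorElt_apply_nil, zero_mul]

theorem mul_generatorElt_apply_zero_cons (w : List (Fin (d + 1))) :
    mul (generatorElt t) b (0 :: w) = t * b w := by
  rw [mul_apply_cons, leftQuot_zero_generatorElt, C_mul_apply, generatorElt_apply_nil, zero_mul,
    zero_add]

theorem mul_generatorElt_apply_singleton {i : Fin (d + 1)} (hi : i ≠ 0) :
    mul (generatorElt t) b [i] = 0 := by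
  simp [mul_apply_cons, mul_apply_nil, leftQuot, generatorElt_apply_nil,
    generatorElt_apply_singleton, hi]

theorem mul_generatorElt_apply_cons_cons {i : Fin (d + 1)} (hi : i ≠ 0) (x : Fin (d + 1))
    (w : List (Fin (d + 1))) :
    mul (generatorElt t) b (i :: x :: w) = (if x = i then t / 2 else 0) * b w := by
  rw [mul_apply_cons, mul_apply_cons, leftQuot_leftQuot_generatorElt t hi, C_mul_apply,
    generatorElt_apply_nil]
  simp [leftQuot, generatorElt_apply_singleton, hi]

end Generator

section BlockWord

variable {d : ℕ} {w : List (Fin (d + 1))}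

theorem blockWord_zero_cons_iff : BlockWord (0 :: w) ↔ BlockWord w := by
  refine ⟨fun h => ?_, BlockWord.zero w⟩
  cases h with
  | zero _ h => exact h
  | pair _ _ hi _ => exact absurd rfl hi

theorem not_blockWord_singleton {i : Fin (d + 1)} (hi : i ≠ 0) : ¬ BlockWord [i] := by
  rintro ⟨⟩
  exact hi rfl

theorem blockWord_cons_cons_iff {i x : Fin (d + 1)} (hi : i ≠ 0) :
    BlockWord (i :: x :: w) ↔ x = i ∧ BlockWord w := by
  refine ⟨fun h => ?_, fun ⟨hx, h⟩ => hx ▸ BlockWord.pair i w hi h⟩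
  cases h with
  | zero _ _ => exact absurd rfl hi
  | pair _ _ _ h => exact ⟨rfl, h⟩

/-- The number of blocks `(k + n(I)) / 2` of a word `I` of length `k` with `n(I)` zeros. -/
def blockCount (w : List (Fin (d + 1))) : ℕ := (w.length + w.count 0) / 2

/-- The number of pair blocks `(k - n(I)) / 2`. -/
def pairCount (w : List (Fin (d + 1))) : ℕ := (w.length - w.count 0) / 2

theorem blockCount_le_length : blockCount w ≤ w.length := by
  have := w.count_le_length (a := 0)
  unfold blockCount
  omega

theorem blockCount_zero_cons : blockCount (0 :: w) = blockCount w + 1 := by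
  simp only [blockCount, List.length_cons, List.count_cons_self]
  omega

theorem pairCount_zero_cons : pairCount (0 :: w) = pairCount w := by
  simp [pairCount]

theorem blockCount_cons_cons {i : Fin (d + 1)} (hi : i ≠ 0) :
    blockCount (i :: i :: w) = blockCount w + 1 := by
  simp only [blockCount, List.length_cons, List.count_cons_of_ne hi]
  omega

theorem pairCount_cons_cons {i : Fin (d + 1)} (hi : i ≠ 0) :
    pairCount (i :: i :: w) = pairCount w + 1 := by
  have := w.count_le_length (a := 0)
  simp only [pairCount, List.length_cons, List.count_cons_of_ne hi]
  omega

theorem BlockWord.blockCount_pos (h : BlockWord w) (hw : w ≠ []) : 0 < blockCount w := by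
  cases h with
  | nil => exact absurd rfl hw
  | zero => simp [blockCount_zero_cons]
  | pair _ _ hi => simp [blockCount_cons_cons hi]

end BlockWord

/-- `t^{(k+n(I))/2} / 2^{(k-n(I))/2}`: each `0` block contributes `t`, each pair block `t / 2`. -/
noncomputable def blockCoeff {d : ℕ} (t : ℝ) (w : List (Fin (d + 1))) : ℝ :=
  t ^ blockCount w / 2 ^ pairCount w

section Coefficients

variable {d : ℕ} (t : ℝ)

theorem blockCoeff_zero_cons (w : List (Fin (d + 1))) :
    blockCoeff t (0 :: w) = t * blockCoeff t w := by
  rw [blockCoeff, blockCoeff, blockCount_zero_cons, pairCount_zero_cons, pow_succ]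
  ring

theorem blockCoeff_cons_cons {i : Fin (d + 1)} (hi : i ≠ 0) (w : List (Fin (d + 1))) :
    blockCoeff t (i :: i :: w) = t / 2 * blockCoeff t w := by
  rw [blockCoeff, blockCoeff, blockCount_cons_cons hi, pairCount_cons_cons hi, pow_succ,
    pow_succ]
  ring

open Classical in
theorem pow_generatorElt_apply (k : ℕ) (w : List (Fin (d + 1))) :
    pow (generatorElt t) k w = if BlockWord w ∧ blockCount w = k then blockCoeff t w else 0 := by
  induction k generalizing w with
  | zero =>
    rcases w with _ | ⟨x, w⟩
    · simp [pow, one, BlockWord.nil, blockCoeff, blockCount, pairCount]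
    · have hne : ¬ (BlockWord (x :: w) ∧ blockCount (x :: w) = 0) := fun ⟨h, h0⟩ =>
        (h.blockCount_pos (List.cons_ne_nil x w)).ne' h0
      simp [pow, one, hne]
  | succ k ih =>
    simp only [pow]
    rcases w with _ | ⟨i, w⟩
    · simp [mul_generatorElt_apply_nil, blockCount]
    obtain rfl | hi := eq_or_ne i 0
    · simp [mul_generatorElt_apply_zero_cons, ih, blockWord_zero_cons_iff, blockCount_zero_cons,
        blockCoeff_zero_cons, mul_ite]
    rcases w with _ | ⟨x, w⟩
    · simp [mul_generatorElt_apply_singleton t _ hi, not_blockWord_singleton hi]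
    rw [mul_generatorElt_apply_cons_cons t _ hi, blockWord_cons_cons_iff hi]
    obtain rfl | hx := eq_or_ne x i
    · simp [ih, blockCount_cons_cons hi, blockCoeff_cons_cons t hi, mul_ite]
    · simp [hx]

open Classical in
theorem exp_generatorElt_apply (w : List (Fin (d + 1))) :
    NCSeries.exp (generatorElt t) w =
      if BlockWord w then blockCoeff t w / (blockCount w).factorial else 0 := by
  simp only [NCSeries.exp, pow_generatorElt_apply, ite_div, zero_div, ite_and]
  split_ifs with hw
  · simp [Finset.sum_ite_eq, Nat.lt_succ_of_le blockCount_le_length]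
  · simp

end Coefficients

/-- **Expansion of `exp(t(X₀ + ½ Σ Xᵢ²))`.** The coefficient of a word
`I = (i₁,…,i_k)` equals `t^{(k+n(I))/2} / (2^{(k-n(I))/2} ((k+n(I))/2)!)` if `I ∈ ℐ_k`
(a concatenation of blocks `{0}` and `{(i,i)}`), and `0` otherwise; `n(I)` is the number
of `0`'s in `I`. -/
theorem exp_generator_coeff {d : ℕ} (t : ℝ) (w : List (Fin (d + 1))) :
    (BlockWord w →
      NCSeries.exp (generatorElt t) w =
        t ^ ((w.length + w.count 0) / 2) /
          (2 ^ ((w.length - w.count 0) / 2) *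
            (Nat.factorial ((w.length + w.count 0) / 2) : ℝ))) ∧
    (¬ BlockWord w → NCSeries.exp (generatorElt t) w = 0) := by
  rw [exp_generatorElt_apply]
  exact ⟨fun hw => by rw [if_pos hw, blockCoeff, div_div]; rfl, fun hw => if_neg hw⟩
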